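/- Assume P(x) < 0 for all x > 0. If a solution γ₁ of γ' = (γ+γ²−P)/(xγ) satisfies γ₁(x₀) ≤ −1 for some x₀ > 0, then for all x ≥ x₀: −x·S_P(x₀,x) ≤ γ₁(x) ≤ −x·S_P(x₀,x) + x/x₀ − 1 < 0. -/

import Mathlib

open Set intervalIntegral

/-!
With `S = S_P(x₀, ·)` one has `S' = -P/(x³S)`, and along a solution of the ODE
`((γ/x)²)' = 2(γ - P)/x³` and `((γ + 1)/x)' = -P/(γx²)`.  Hence `S² - (γ/x)²` has derivative
`-2γ/x³ ≥ 0`, which gives the lower bound `γ ≥ -xS`, and then `1/x₀ - S - (γ + 1)/x` has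
derivative `P(γ + xS)/(γx³S) ≥ 0`, which gives the upper bound.  Both functions vanish at `x₀`.
Finally `S ≥ |γ(x₀)|/x₀ ≥ 1/x₀` makes the upper bound at most `-1`.
-/

lemma monotoneOn_Ici_of_hasDerivAt_nonneg {a : ℝ} {f f' : ℝ → ℝ}
    (hf : ∀ x ∈ Ici a, HasDerivAt f (f' x) x) (hf' : ∀ x ∈ Ici a, 0 ≤ f' x) :
    MonotoneOn f (Ici a) :=
  monotoneOn_of_hasDerivWithinAt_nonneg (convex_Ici a)
    (fun x hx => (hf x hx).continuousAt.continuousWithinAt)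
    (fun x hx => (hf x (interior_subset hx)).hasDerivWithinAt)
    (fun x hx => hf' x (interior_subset hx))

section Ode

variable {γ P : ℝ → ℝ} {x : ℝ}

lemma hasDerivAt_div_sq_of_ode (hx : x ≠ 0) (hγ : γ x ≠ 0)
    (hode : HasDerivAt γ ((γ x + γ x ^ 2 - P x) / (x * γ x)) x) :
    HasDerivAt (fun y => (γ y / y) ^ 2) (2 * (γ x - P x) / x ^ 3) x := by
  refine ((hode.fun_div (hasDerivAt_id' x) hx).fun_pow 2).congr_deriv ?_
  norm_num
  field_simp
  ring

lemma hasDerivAt_add_one_div_of_ode (hx : x ≠ 0) (hγ : γ x ≠ 0)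
    (hode : HasDerivAt γ ((γ x + γ x ^ 2 - P x) / (x * γ x)) x) :
    HasDerivAt (fun y => (γ y + 1) / y) (-P x / (γ x * x ^ 2)) x := by
  refine ((hode.add_const 1).fun_div (hasDerivAt_id' x) hx).congr_deriv ?_
  field_simp
  ring

end Ode

noncomputable def envelopeSq (P : ℝ → ℝ) (x₀ a x : ℝ) : ℝ :=
  a ^ 2 / x₀ ^ 2 + 2 * ∫ z in x₀..x, -P z / z ^ 3

/-- `envelope P x₀ (γ x₀) x` is the paper's `S_P(x₀, x)`. -/
noncomputable def envelope (P : ℝ → ℝ) (x₀ a x : ℝ) : ℝ :=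
  √(envelopeSq P x₀ a x)

section Envelope

variable {P : ℝ → ℝ} {x₀ a x : ℝ}

lemma envelopeSq_self : envelopeSq P x₀ a x₀ = (a / x₀) ^ 2 := by
  simp [envelopeSq, div_pow]

lemma envelope_self : envelope P x₀ a x₀ = |a| / |x₀| := by
  rw [envelope, envelopeSq_self, Real.sqrt_sq_eq_abs, abs_div]

lemma sq_div_le_envelopeSq (hP : ∀ z > 0, P z ≤ 0) (hx₀ : 0 < x₀) (hx : x₀ ≤ x) :
    (a / x₀) ^ 2 ≤ envelopeSq P x₀ a x := by
  have hint : 0 ≤ ∫ z in x₀..x, -P z / z ^ 3 :=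
    integral_nonneg hx fun z hz =>
      have hz₀ : 0 < z := hx₀.trans_le hz.1
      div_nonneg (neg_nonneg.2 (hP z hz₀)) (by positivity)
  rw [envelopeSq, div_pow]
  linarith

lemma abs_div_le_envelope (hP : ∀ z > 0, P z ≤ 0) (hx₀ : 0 < x₀) (hx : x₀ ≤ x) :
    |a| / x₀ ≤ envelope P x₀ a x := by
  have := Real.abs_le_sqrt (sq_div_le_envelopeSq hP hx₀ hx (a := a))
  rwa [abs_div, abs_of_pos hx₀] at this

lemma neg_mul_envelope_add_lt_zero (hP : ∀ z > 0, P z ≤ 0) (hx₀ : 0 < x₀) (ha : a ≤ -1)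
    (hx : x₀ ≤ x) : -(x * envelope P x₀ a x) + x / x₀ - 1 < 0 := by
  have hS : 1 / x₀ ≤ envelope P x₀ a x :=
    (div_le_div_of_nonneg_right (by rw [abs_of_neg (by linarith)]; linarith) hx₀.le).trans
      (abs_div_le_envelope hP hx₀ hx)
  have := mul_le_mul_of_nonneg_left hS (hx₀.trans_le hx).le
  rw [← div_eq_mul_one_div] at this
  linarith

lemma hasDerivAt_envelopeSq (hPc : ContinuousOn P (Ioi 0)) (hx₀ : 0 < x₀) (hx : 0 < x) :
    HasDerivAt (envelopeSq P x₀ a) (2 * (-P x / x ^ 3)) x := by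
  have hF : ContinuousOn (fun z => -P z / z ^ 3) (Ioi 0) :=
    hPc.neg.div (continuous_pow 3).continuousOn fun z hz => pow_ne_zero 3 (ne_of_gt hz)
  have hFint : IntervalIntegrable (fun z => -P z / z ^ 3) MeasureTheory.volume x₀ x :=
    (hF.mono fun z hz => lt_of_lt_of_le (lt_min hx₀ hx) hz.1).intervalIntegrable
  exact ((integral_hasDerivAt_right hFint (hF.stronglyMeasurableAtFilter isOpen_Ioi x hx)
    (hF.continuousAt (isOpen_Ioi.mem_nhds hx))).const_mul 2).const_add _

lemma hasDerivAt_envelope (hPc : ContinuousOn P (Ioi 0)) (hx₀ : 0 < x₀) (hx : 0 < x)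
    (hS : envelopeSq P x₀ a x ≠ 0) :
    HasDerivAt (envelope P x₀ a) (-P x / x ^ 3 / envelope P x₀ a x) x := by
  have := (hasDerivAt_envelopeSq hPc hx₀ hx).sqrt hS
  rwa [mul_div_mul_left _ _ two_ne_zero] at this

end Envelope

section Solution

variable {P γ : ℝ → ℝ} {x₀ : ℝ} (hPc : ContinuousOn P (Ioi 0)) (hx₀ : 0 < x₀)
  (hode : ∀ x ∈ Ici x₀, HasDerivAt γ ((γ x + γ x ^ 2 - P x) / (x * γ x)) x)
  (hneg : ∀ x ∈ Ici x₀, γ x < 0)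
include hPc hx₀ hode hneg

lemma neg_mul_envelope_le {x : ℝ} (hx : x₀ ≤ x) :
    -(x * envelope P x₀ (γ x₀) x) ≤ γ x := by
  have hpos : ∀ y ∈ Ici x₀, 0 < y := fun y hy => hx₀.trans_le hy
  have hmono : MonotoneOn (fun y => envelopeSq P x₀ (γ x₀) y - (γ y / y) ^ 2) (Ici x₀) := by
    refine monotoneOn_Ici_of_hasDerivAt_nonneg (f' := fun y => -2 * γ y / y ^ 3) (fun y hy => ?_)
      fun y hy => div_nonneg (by linarith [hneg y hy]) (pow_pos (hpos y hy) 3).le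
    refine ((hasDerivAt_envelopeSq hPc hx₀ (hpos y hy)).sub
      (hasDerivAt_div_sq_of_ode (hpos y hy).ne' (hneg y hy).ne (hode y hy))).congr_deriv ?_
    ring
  have hsq : (γ x / x) ^ 2 ≤ envelopeSq P x₀ (γ x₀) x := by
    have := hmono self_mem_Ici hx hx
    simp only [envelopeSq_self, sub_self] at this
    linarith
  have hxpos : 0 < x := hpos x hx
  have := neg_le_of_abs_le (Real.abs_le_sqrt hsq)
  rw [← envelope, le_div_iff₀ hxpos] at this
  linarith

lemma le_neg_mul_envelope_add (hP : ∀ z > 0, P z ≤ 0) {x : ℝ} (hx : x₀ ≤ x) :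
    γ x ≤ -(x * envelope P x₀ (γ x₀) x) + x / x₀ - 1 := by
  have hpos : ∀ y ∈ Ici x₀, 0 < y := fun y hy => hx₀.trans_le hy
  have hSpos : ∀ y ∈ Ici x₀, 0 < envelope P x₀ (γ x₀) y := fun y hy =>
    (div_pos (abs_pos.2 (hneg x₀ self_mem_Ici).ne) hx₀).trans_le (abs_div_le_envelope hP hx₀ hy)
  have hmono : MonotoneOn (fun y => 1 / x₀ - envelope P x₀ (γ x₀) y - (γ y + 1) / y)
      (Ici x₀) := by
    refine monotoneOn_Ici_of_hasDerivAt_nonneg (f' := fun y =>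
        P y * (γ y + y * envelope P x₀ (γ x₀) y) / (γ y * y ^ 3 * envelope P x₀ (γ x₀) y))
      (fun y hy => ?_) fun y hy => ?_
    · have hSsq : envelopeSq P x₀ (γ x₀) y ≠ 0 := (Real.sqrt_pos.1 (hSpos y hy)).ne'
      refine (((hasDerivAt_const y (1 / x₀)).sub
        (hasDerivAt_envelope hPc hx₀ (hpos y hy) hSsq)).sub
        (hasDerivAt_add_one_div_of_ode (hpos y hy).ne' (hneg y hy).ne (hode y hy))).congr_deriv ?_
      field_simp [(hpos y hy).ne', (hneg y hy).ne, (hSpos y hy).ne']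
      ring
    · have hlow := neg_mul_envelope_le hPc hx₀ hode hneg hy
      refine div_nonneg_of_nonpos
        (mul_nonpos_of_nonpos_of_nonneg (hP y (hpos y hy)) (by linarith)) ?_
      exact (mul_neg_of_neg_of_pos (mul_neg_of_neg_of_pos (hneg y hy) (pow_pos (hpos y hy) 3))
        (hSpos y hy)).le
  have hstart : 1 / x₀ - envelope P x₀ (γ x₀) x₀ - (γ x₀ + 1) / x₀ = 0 := by
    rw [envelope_self, abs_of_neg (hneg x₀ self_mem_Ici), abs_of_pos hx₀]
    ring
  have hdiv : (γ x + 1) / x ≤ 1 / x₀ - envelope P x₀ (γ x₀) x := by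
    have := hmono self_mem_Ici hx hx
    simp only [hstart] at this
    linarith
  rw [div_le_iff₀ (hpos x hx)] at hdiv
  linarith [show (1 / x₀ - envelope P x₀ (γ x₀) x) * x = -(x * envelope P x₀ (γ x₀) x) + x / x₀
    by ring]

end Solution

/-- if a solution of the ODE satisfies `γ(x₀) ≤ −1` (with `P < 0`
on `(0,∞)`), then for all `x ≥ x₀`:
`−x·S_P(x₀,x) ≤ γ x ≤ −x·S_P(x₀,x) + x/x₀ − 1 < 0`. -/
theorem qcd_below_minus_one_bounds
    (P : ℝ → ℝ) (hPcont : ContinuousOn P (Ioi 0))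
    (hPneg : ∀ x > (0 : ℝ), P x < 0)
    (γ : ℝ → ℝ) (x₀ : ℝ) (hx₀ : 0 < x₀)
    (hode : ∀ x ∈ Ici x₀,
      HasDerivAt γ ((γ x + γ x ^ 2 - P x) / (x * γ x)) x)
    (hneg : ∀ x ∈ Ici x₀, γ x < 0)
    (hinit : γ x₀ ≤ -1) :
    ∀ x ∈ Ici x₀,
      -(x * Real.sqrt (γ x₀ ^ 2 / x₀ ^ 2 + 2 * ∫ z in x₀..x, -P z / z ^ 3)) ≤ γ x ∧
      γ x ≤ -(x * Real.sqrt (γ x₀ ^ 2 / x₀ ^ 2 + 2 * ∫ z in x₀..x, -P z / z ^ 3))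
              + x / x₀ - 1 ∧
      -(x * Real.sqrt (γ x₀ ^ 2 / x₀ ^ 2 + 2 * ∫ z in x₀..x, -P z / z ^ 3))
              + x / x₀ - 1 < 0 := by
  intro x hx
  have hPle : ∀ z > 0, P z ≤ 0 := fun z hz => (hPneg z hz).le
  exact ⟨neg_mul_envelope_le hPcont hx₀ hode hneg hx,
    le_neg_mul_envelope_add hPcont hx₀ hode hneg hPle hx,
    neg_mul_envelope_add_lt_zero hPle hx₀ hinit hx⟩
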